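/- arXiv:2510.08187 — 6 statements merged into one kernel-verified Lean document; each statement's English description precedes it below -/
import Mathlib

section
/- Let J ⊆ ℝ be a nonempty open interval, x : J → ℝᵈ a continuous curve, and for each t ∈ J let ⋈ₜ be the synchrony pattern of x(t) (the partition of cells by equality of components). Then there exists a nonempty open subinterval J₀ ⊆ J on which t ↦ ⋈ₜ is constant. -/
/-! Failing to be synchronized is an open condition on a pair of cells, so along a continuous
curve the set of unsynchronized pairs can only grow near any time. At a time of `J` where this
finite set is maximal it therefore stays constant on a neighbourhood. -/

open Filter Set Topology

theorem exists_mem_eventually_forall_iff {X ι : Type*} [TopologicalSpace X] [Finite ι]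
    {J : Set X} (hJ : J.Nonempty) {P : ι → X → Prop}
    (hP : ∀ i, ∀ t ∈ J, P i t → ∀ᶠ u in 𝓝 t, P i u) :
    ∃ t ∈ J, ∀ᶠ u in 𝓝 t, u ∈ J → ∀ i, (P i u ↔ P i t) := by
  obtain ⟨t, htJ, hmax⟩ :=
    Finite.exists_maximalFor' (fun t i => P i t) J (Set.toFinite _) hJ
  refine ⟨t, htJ, ?_⟩
  have hgrow : ∀ᶠ u in 𝓝 t, ∀ i, P i t → P i u := by
    simpa only [eventually_all] using fun i (hi : P i t) => hP i t htJ hi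
  filter_upwards [hgrow] with u hu huJ i
  exact ⟨fun hi => hmax huJ hu i hi, hu i⟩

theorem ContinuousAt.eventually_not_forall_eq_cast {C : Type*} {d : C → ℕ} {X : Type*}
    [TopologicalSpace X] {x : X → Π c : C, (Fin (d c) → ℝ)} {t : X} (hx : ContinuousAt x t)
    {c c' : C} (h : d c = d c') (hne : ¬ ∀ i, x t c i = x t c' (Fin.cast h i)) :
    ∀ᶠ u in 𝓝 t, ¬ ∀ i, x u c i = x u c' (Fin.cast h i) := by
  have hcont : ContinuousAt (fun u => x u c - fun i => x u c' (Fin.cast h i)) t :=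
    (continuous_apply c |>.continuousAt.comp hx).sub <|
      continuousAt_pi.2 fun i => (continuous_apply _).continuousAt.comp
        ((continuous_apply c').continuousAt.comp hx)
  simp only [← funext_iff, ← sub_eq_zero (a := x _ c)] at hne ⊢
  exact hcont.eventually_ne hne

theorem stmt_1_general {C : Type*} [Fintype C] {d : C → ℕ}
    (J : Set ℝ) (hJo : IsOpen J) (hJne : J.Nonempty)
    (x : ℝ → Π c : C, (Fin (d c) → ℝ)) (hx : ContinuousOn x J) :
    ∃ a b : ℝ, a < b ∧ Set.Ioo a b ⊆ J ∧
      ∀ t ∈ Set.Ioo a b, ∀ s ∈ Set.Ioo a b, ∀ c c' : C, ∀ h : d c = d c',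
        ((∀ i, x t c i = x t c' (Fin.cast h i)) ↔
          (∀ i, x s c i = x s c' (Fin.cast h i))) := by
  obtain ⟨t₀, ht₀J, hconst⟩ := exists_mem_eventually_forall_iff hJne
    (P := fun (p : {p : C × C // d p.1 = d p.2}) u =>
      ¬ ∀ i, x u p.1.1 i = x u p.1.2 (Fin.cast p.2 i))
    fun p t htJ => (hx.continuousAt (hJo.mem_nhds htJ)).eventually_not_forall_eq_cast p.2
  obtain ⟨a, b, hab, hsub⟩ := mem_nhds_iff_exists_Ioo_subset.1
    ((hJo.eventually_mem ht₀J).and hconst)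
  refine ⟨a, b, hab.1.trans hab.2, fun u hu => (hsub hu).1, ?_⟩
  intro t ht s hs c c' h
  have hsync : ∀ u ∈ Ioo a b, (∀ i, x u c i = x u c' (Fin.cast h i)) ↔
      ∀ i, x t₀ c i = x t₀ c' (Fin.cast h i) := fun u hu =>
    not_iff_not.1 ((hsub hu).2 (hsub hu).1 ⟨(c, c'), h⟩)
  rw [hsync t ht, hsync s hs]

/-- For a continuous curve `x` on a nonempty open interval `J ⊆ ℝ` with values
in a product of cell state spaces `ℝ^{d c}`, there is a nonempty open subinterval `J₀ ⊆ J`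
on which the synchrony pattern `t ↦ ⋈ₜ` (where `c ⋈ₜ c'` iff `x_c t = x_{c'} t`, cells being
comparable when their dimensions agree) is constant. -/
theorem stmt_1 {C : Type*} [Fintype C] {d : C → ℕ}
    (J : Set ℝ) (hJo : IsOpen J) (hJne : J.Nonempty) (hJc : J.OrdConnected)
    (x : ℝ → Π c : C, (Fin (d c) → ℝ)) (hx : ContinuousOn x J) :
    ∃ a b : ℝ, a < b ∧ Set.Ioo a b ⊆ J ∧
      ∀ t ∈ Set.Ioo a b, ∀ s ∈ Set.Ioo a b, ∀ c c' : C, ∀ h : d c = d c',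
        ((∀ i, x t c i = x t c' (Fin.cast h i)) ↔
          (∀ i, x s c i = x s c' (Fin.cast h i))) :=
  stmt_1_general J hJo hJne x hx
end

section
/- Let X and Y be Banach spaces, L : X → Y a left-Fredholm operator with splitting Y = R(L) ⊕ Y₂ and corresponding continuous projection p onto Y₂. Suppose Z ⊆ Y is a subspace such that there exists κ > 0 with ‖p(z)‖ ≥ κ‖z‖ for all z ∈ Z. Then for any compact operator K : X → Y, the subspace Z ∩ R(L + K) is finite-dimensional. -/
/-!
The perturbation `L + K` is sequentially proper on bounded sets: a bounded sequence whose image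
converges has a convergent subsequence (split off the kernel of `L`, use the open mapping theorem
for `L` and compactness of `K`). This forces `L + K` to have a finite-dimensional kernel and
preimages `x` of `z` with `‖x‖ ≤ C ‖z‖`. Since `p` kills `R(L)`, `p z = p (K x)` for
`z = (L + K) x`, so `p` maps bounded sequences of `Z ∩ R(L + K)` to sequences with convergent
subsequences, and `κ ‖z‖ ≤ ‖p z‖` turns these into Cauchy subsequences. By Riesz's lemma
`Z ∩ R(L + K)` is finite-dimensional.
-/

open Filter Topology

theorem FiniteDimensional.of_forall_exists_cauchySeq_subseq {𝕜 E : Type*}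
    [NontriviallyNormedField 𝕜] [CompleteSpace 𝕜] [NormedAddCommGroup E] [NormedSpace 𝕜 E]
    (h : ∀ (u : ℕ → E) (R : ℝ), (∀ n, ‖u n‖ ≤ R) →
      ∃ φ : ℕ → ℕ, StrictMono φ ∧ CauchySeq (u ∘ φ)) :
    FiniteDimensional 𝕜 E := by
  by_contra hE
  obtain ⟨R, u, -, huR, hsep⟩ := exists_seq_norm_le_one_le_norm_sub hE
  obtain ⟨φ, hφ, hu⟩ := h u R huR
  obtain ⟨N, hN⟩ := Metric.cauchySeq_iff'.mp hu 1 one_pos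
  have hclose := hN (N + 1) N.le_succ
  have hfar := hsep (hφ.injective.ne N.succ_ne_self)
  rw [dist_eq_norm] at hclose
  exact (hfar.trans_lt hclose).false

theorem cauchySeq_of_norm_sub_le_mul {E F : Type*} [SeminormedAddCommGroup E]
    [SeminormedAddCommGroup F] {u : ℕ → E} {v : ℕ → F} (C : ℝ)
    (huv : ∀ m n, ‖u m - u n‖ ≤ C * ‖v m - v n‖) (hv : CauchySeq v) : CauchySeq u := by
  rw [cauchySeq_iff_tendsto_dist_atTop_0] at hv ⊢
  refine squeeze_zero (fun _ ↦ dist_nonneg) (fun mn ↦ ?_) (by simpa using hv.const_mul C)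
  simpa only [dist_eq_norm] using huv mn.1 mn.2

theorem apply_eq_zero_of_disjoint_of_sub_mem {R M : Type*} [Ring R] [AddCommGroup M] [Module R M]
    {p : M → M} {A B : Submodule R M} (hAB : Disjoint A B) (hp : ∀ y, p y ∈ B ∧ y - p y ∈ A)
    {y : M} (hy : y ∈ A) : p y = 0 := by
  have hpA : p y ∈ A := by simpa using A.sub_mem hy (hp y).2
  exact (Submodule.disjoint_def.mp hAB) _ hpA (hp y).1

section

variable {𝕜 E F : Type*} [RCLike 𝕜] [NormedAddCommGroup E] [NormedSpace 𝕜 E]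
  [NormedAddCommGroup F] [NormedSpace 𝕜 F]

theorem IsCompactOperator.exists_tendsto_subseq {K : E →L[𝕜] F} (hK : IsCompactOperator K)
    {x : ℕ → E} {R : ℝ} (hx : ∀ n, ‖x n‖ ≤ R) :
    ∃ y, ∃ φ : ℕ → ℕ, StrictMono φ ∧ Tendsto (K ∘ x ∘ φ) atTop (𝓝 y) := by
  obtain ⟨M, hM, hKM⟩ := hK.image_closedBall_subset_compact R
  obtain ⟨y, -, φ, hφ, hy⟩ :=
    hM.tendsto_subseq fun n ↦ hKM ⟨x n, mem_closedBall_zero_iff.mpr (hx n), rfl⟩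
  exact ⟨y, φ, hφ, hy⟩

theorem ContinuousLinearMap.exists_preimage_norm_le_of_isClosed_range [CompleteSpace E]
    [CompleteSpace F] (L : E →L[𝕜] F)
    (hrange : IsClosed (LinearMap.range (L : E →ₗ[𝕜] F) : Set F)) :
    ∃ C > 0, ∀ y ∈ LinearMap.range (L : E →ₗ[𝕜] F), ∃ x, L x = y ∧ ‖x‖ ≤ C * ‖y‖ := by
  have : CompleteSpace (LinearMap.range (L : E →ₗ[𝕜] F)) := hrange.completeSpace_coe
  obtain ⟨C, hC, hpre⟩ := L.rangeRestrict.exists_preimage_norm_le L.surjective_rangeRestrict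
  refine ⟨C, hC, fun y hy ↦ ?_⟩
  obtain ⟨x, hx, hxC⟩ := hpre ⟨y, hy⟩
  exact ⟨x, congrArg Subtype.val hx, hxC⟩

/-- Between Banach spaces these are exactly the operators with finite-dimensional kernel and
closed range. -/
def ContinuousLinearMap.IsProperOnBounded (T : E →L[𝕜] F) : Prop :=
  ∀ (x : ℕ → E) (R : ℝ), (∀ n, ‖x n‖ ≤ R) → ∀ w, Tendsto (T ∘ x) atTop (𝓝 w) →
    ∃ a, ∃ φ : ℕ → ℕ, StrictMono φ ∧ Tendsto (x ∘ φ) atTop (𝓝 a)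

namespace ContinuousLinearMap

theorem isProperOnBounded_of_finiteDimensional_ker_of_isClosed_range [CompleteSpace E]
    [CompleteSpace F] {L : E →L[𝕜] F}
    (hker : FiniteDimensional 𝕜 (LinearMap.ker (L : E →ₗ[𝕜] F)))
    (hrange : IsClosed (LinearMap.range (L : E →ₗ[𝕜] F) : Set F)) : L.IsProperOnBounded := by
  intro x R hx w hw
  obtain ⟨a, rfl⟩ : w ∈ LinearMap.range (L : E →ₗ[𝕜] F) :=
    hrange.mem_of_tendsto hw (Eventually.of_forall fun n ↦ ⟨x n, rfl⟩)
  obtain ⟨C, -, hC⟩ := L.exists_preimage_norm_le_of_isClosed_range hrange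
  choose e he heC using fun n ↦ hC (L (x n - a)) ⟨_, rfl⟩
  have he0 : Tendsto e atTop (𝓝 0) := by
    refine squeeze_zero_norm heC ?_
    simpa [map_sub] using ((hw.sub_const (L a)).norm.const_mul C)
  obtain ⟨B, hB⟩ := he0.cauchySeq.norm_bddAbove
  -- `x n = a + e n + k n` with `e n → 0` and `k n` bounded in the finite-dimensional kernel
  set k : ℕ → LinearMap.ker (L : E →ₗ[𝕜] F) :=
    fun n ↦ ⟨x n - a - e n, by simp [LinearMap.mem_ker, he, map_sub]⟩ with hk
  have := FiniteDimensional.proper 𝕜 (LinearMap.ker (L : E →ₗ[𝕜] F))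
  have hkR : ∀ n, k n ∈ Metric.closedBall 0 (R + ‖a‖ + B) := fun n ↦ by
    rw [mem_closedBall_zero_iff]
    calc ‖x n - a - e n‖ ≤ ‖x n‖ + ‖a‖ + ‖e n‖ := norm_sub_le_of_le (norm_sub_le _ _) le_rfl
      _ ≤ R + ‖a‖ + B := by gcongr; exacts [hx n, hB ⟨n, rfl⟩]
  obtain ⟨c, -, φ, hφ, hc⟩ := tendsto_subseq_of_bounded Metric.isBounded_closedBall hkR
  refine ⟨a + 0 + c, φ, hφ, ?_⟩
  have hsum := ((tendsto_const_nhds (x := a)).add (he0.comp hφ.tendsto_atTop)).add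
    ((continuous_subtype_val.tendsto c).comp hc)
  refine hsum.congr fun n ↦ ?_
  simp [hk]

theorem IsProperOnBounded.add_compact {T K : E →L[𝕜] F} (hT : T.IsProperOnBounded)
    (hK : IsCompactOperator K) : (T + K).IsProperOnBounded := by
  intro x R hx w hw
  obtain ⟨y, φ, hφ, hy⟩ := hK.exists_tendsto_subseq hx
  have hTx : Tendsto (T ∘ x ∘ φ) atTop (𝓝 (w - y)) :=
    ((hw.comp hφ.tendsto_atTop).sub hy).congr fun n ↦ by simp
  obtain ⟨a, ψ, hψ, ha⟩ := hT (x ∘ φ) R (fun n ↦ hx _) _ hTx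
  exact ⟨a, φ ∘ ψ, hφ.comp hψ, ha⟩

variable {T : E →L[𝕜] F}

theorem IsProperOnBounded.finiteDimensional_ker (hT : T.IsProperOnBounded) :
    FiniteDimensional 𝕜 (LinearMap.ker (T : E →ₗ[𝕜] F)) := by
  refine FiniteDimensional.of_forall_exists_cauchySeq_subseq fun u R hu ↦ ?_
  have hTu : Tendsto (T ∘ fun n ↦ (u n : E)) atTop (𝓝 0) := by
    simp [Function.comp_def]
  obtain ⟨a, φ, hφ, ha⟩ := hT _ R hu 0 hTu
  exact ⟨φ, hφ, cauchySeq_of_norm_sub_le_mul 1 (fun m n ↦ by simp) ha.cauchySeq⟩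

theorem IsProperOnBounded.exists_norm_le_of_disjoint (hT : T.IsProperOnBounded)
    {S : Submodule 𝕜 E} (hS : IsClosed (S : Set E))
    (hdisj : Disjoint (LinearMap.ker (T : E →ₗ[𝕜] F)) S) :
    ∃ C > 0, ∀ x ∈ S, ‖x‖ ≤ C * ‖T x‖ := by
  by_contra! h
  have hunit : ∀ n : ℕ, ∃ y ∈ S, ‖y‖ = 1 ∧ ‖T y‖ ≤ 1 / (n + 1) := by
    intro n
    obtain ⟨x, hxS, hx⟩ := h (n + 1) n.cast_add_one_pos
    have hx0 : x ≠ 0 := by rintro rfl; simp at hx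
    refine ⟨(‖x‖⁻¹ : 𝕜) • x, S.smul_mem _ hxS, norm_smul_inv_norm hx0, ?_⟩
    rw [map_smul, norm_smul, norm_inv, RCLike.norm_ofReal, abs_norm, inv_mul_le_iff₀
      (norm_pos_iff.mpr hx0), mul_one_div, le_div_iff₀ n.cast_add_one_pos, mul_comm]
    exact hx.le
  choose y hyS hy1 hTy using hunit
  have hTy0 : Tendsto (T ∘ y) atTop (𝓝 0) :=
    squeeze_zero_norm hTy tendsto_one_div_add_atTop_nhds_zero_nat
  obtain ⟨a, φ, hφ, ha⟩ := hT y 1 (fun n ↦ (hy1 n).le) 0 hTy0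
  have haS : a ∈ S := hS.mem_of_tendsto ha (Eventually.of_forall fun n ↦ hyS _)
  have haT : T a = 0 :=
    tendsto_nhds_unique ((T.continuous.tendsto a).comp ha) (hTy0.comp hφ.tendsto_atTop)
  have ha1 : ‖a‖ = 1 := tendsto_nhds_unique ha.norm (by simp [hy1])
  rw [Submodule.disjoint_def.mp hdisj a haT haS, norm_zero] at ha1
  exact zero_ne_one ha1

theorem IsProperOnBounded.exists_preimage_norm_le (hT : T.IsProperOnBounded) :
    ∃ C > 0, ∀ z ∈ LinearMap.range (T : E →ₗ[𝕜] F), ∃ x, T x = z ∧ ‖x‖ ≤ C * ‖z‖ := by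
  have := hT.finiteDimensional_ker
  obtain ⟨S, hS, hcompl⟩ :=
    (Submodule.ClosedComplemented.of_finiteDimensional
      (LinearMap.ker (T : E →ₗ[𝕜] F))).exists_isClosed_isCompl
  obtain ⟨C, hC, hCS⟩ := hT.exists_norm_le_of_disjoint hS hcompl.disjoint
  refine ⟨C, hC, ?_⟩
  rintro _ ⟨w, rfl⟩
  obtain ⟨k, s, hk, hs, rfl⟩ := Submodule.codisjoint_iff_exists_add_eq.mp hcompl.codisjoint w
  have hTs : T (k + s) = T s := by simp [show T k = 0 from hk]
  exact ⟨s, hTs.symm, hTs ▸ hCS s hs⟩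

end ContinuousLinearMap

end

theorem stmt_3_general {X Y : Type*}
    [NormedAddCommGroup X] [NormedSpace ℝ X] [CompleteSpace X]
    [NormedAddCommGroup Y] [NormedSpace ℝ Y] [CompleteSpace Y]
    (L : X →L[ℝ] Y)
    (hker : FiniteDimensional ℝ (LinearMap.ker (L : X →ₗ[ℝ] Y)))
    (hrange : IsClosed ((LinearMap.range (L : X →ₗ[ℝ] Y) : Submodule ℝ Y) : Set Y))
    (Y₂ : Submodule ℝ Y)
    (hYcompl : IsCompl (LinearMap.range (L : X →ₗ[ℝ] Y)) Y₂)
    (p : Y →L[ℝ] Y)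
    (hp : ∀ y : Y, p y ∈ Y₂ ∧ y - p y ∈ LinearMap.range (L : X →ₗ[ℝ] Y))
    (Z : Submodule ℝ Y) (κ : ℝ) (hκ : 0 < κ)
    (hZ : ∀ z ∈ Z, κ * ‖z‖ ≤ ‖p z‖)
    (K : X →L[ℝ] Y) (hK : IsCompactOperator K) :
    FiniteDimensional ℝ (Z ⊓ LinearMap.range ((L + K : X →L[ℝ] Y) : X →ₗ[ℝ] Y) : Submodule ℝ Y) := by
  obtain ⟨C, hC, hpre⟩ := ((L.isProperOnBounded_of_finiteDimensional_ker_of_isClosed_range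
    hker hrange).add_compact hK).exists_preimage_norm_le
  refine FiniteDimensional.of_forall_exists_cauchySeq_subseq fun u R hu ↦ ?_
  have hpL : ∀ x, p (L x) = 0 := fun x ↦
    apply_eq_zero_of_disjoint_of_sub_mem hYcompl.disjoint hp ⟨x, rfl⟩
  choose x hx hxC using fun n ↦ hpre _ (u n).2.2
  have hpu : ∀ n, p (u n) = p (K (x n)) := fun n ↦ by simp [← hx, hpL]
  obtain ⟨y, φ, hφ, hy⟩ :=
    hK.exists_tendsto_subseq fun n ↦ (hxC n).trans (mul_le_mul_of_nonneg_left (hu n) hC.le)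
  refine ⟨φ, hφ, cauchySeq_of_norm_sub_le_mul κ⁻¹ (fun m n ↦ ?_)
    ((p.continuous.tendsto y).comp hy).cauchySeq⟩
  rw [le_inv_mul_iff₀ hκ]
  simpa [hpu] using hZ _ (Z.sub_mem (u (φ m)).2.1 (u (φ n)).2.1)

/-- Let `L : X → Y` be a left-Fredholm operator between Banach spaces, with
splitting `Y = R(L) ⊕ Y₂` and corresponding continuous projection `p` onto `Y₂` along `R(L)`.
If `Z ⊆ Y` is a subspace on which `‖p z‖ ≥ κ ‖z‖` for some `κ > 0`, then for every compact
operator `K : X → Y` the subspace `Z ∩ R(L + K)` is finite-dimensional. -/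
theorem stmt_3 {X Y : Type*}
    [NormedAddCommGroup X] [NormedSpace ℝ X] [CompleteSpace X]
    [NormedAddCommGroup Y] [NormedSpace ℝ Y] [CompleteSpace Y]
    (L : X →L[ℝ] Y)
    (hker : FiniteDimensional ℝ (LinearMap.ker (L : X →ₗ[ℝ] Y)))
    (X₁ : Submodule ℝ X) (hX₁ : IsClosed (X₁ : Set X))
    (hcompl : IsCompl (LinearMap.ker (L : X →ₗ[ℝ] Y)) X₁)
    (hrange : IsClosed ((LinearMap.range (L : X →ₗ[ℝ] Y) : Submodule ℝ Y) : Set Y))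
    (Y₂ : Submodule ℝ Y) (hY₂ : IsClosed (Y₂ : Set Y))
    (hYcompl : IsCompl (LinearMap.range (L : X →ₗ[ℝ] Y)) Y₂)
    (p : Y →L[ℝ] Y)
    (hp : ∀ y : Y, p y ∈ Y₂ ∧ y - p y ∈ LinearMap.range (L : X →ₗ[ℝ] Y))
    (Z : Submodule ℝ Y) (κ : ℝ) (hκ : 0 < κ)
    (hZ : ∀ z ∈ Z, κ * ‖z‖ ≤ ‖p z‖)
    (K : X →L[ℝ] Y) (hK : IsCompactOperator K) :
    FiniteDimensional ℝ (Z ⊓ LinearMap.range ((L + K : X →L[ℝ] Y) : X →ₗ[ℝ] Y) : Submodule ℝ Y) :=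
  stmt_3_general L hker hrange Y₂ hYcompl p hp Z κ hκ hZ K hK
end

section
/- Let X and Y be Banach spaces, L : X → Y a left-Fredholm operator, and K : X → Y a compact operator. Then L + K is a left-Fredholm operator with the same index as L (where the index is dim Ker minus the dimension of a complement of the range, possibly −∞). -/
/-!
Let `S` be a left parametrix of `L`: `S ∘ L = 1 - P` with `P` of finite rank, `ker S` a
complement of `range L` and `range S` a complement of `ker L`. Then `S ∘ (L + K) = 1 - C` with
`C = P - S ∘ K` compact. Riesz theory, obtained from the Fredholm alternative by a finite-rank
perturbation, makes `1 - C` invertible modulo finite-rank operators, with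
`dim ker (1 - C) = codim range (1 - C) < ∞`. So `L + K` is invertible from the left modulo
finite rank, which makes it left-Fredholm, and the additivity of the index under composition
gives `ind (L + K) = -ind S = ind L`. Written in `ℕ∞` without subtraction, the same identity shows
that the cokernels of `L` and `L + K` are finite-dimensional together.
-/

open Module

/-- A bounded operator is left-Fredholm if its kernel is finite-dimensional and splits
(admits a closed complement) and its range is closed and splits. -/
def LeftFredholm {X Y : Type*} [NormedAddCommGroup X] [NormedSpace ℝ X]
    [NormedAddCommGroup Y] [NormedSpace ℝ Y] (L : X →L[ℝ] Y) : Prop :=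
  FiniteDimensional ℝ (LinearMap.ker (L : X →ₗ[ℝ] Y)) ∧
  (∃ X₁ : Submodule ℝ X, IsClosed (X₁ : Set X) ∧ IsCompl (LinearMap.ker (L : X →ₗ[ℝ] Y)) X₁) ∧
  IsClosed ((LinearMap.range (L : X →ₗ[ℝ] Y) : Submodule ℝ Y) : Set Y) ∧
  (∃ Y₂ : Submodule ℝ Y, IsClosed (Y₂ : Set Y) ∧ IsCompl (LinearMap.range (L : X →ₗ[ℝ] Y)) Y₂)

open Classical in
/-- The Fredholm index: `dim Ker L − dim coker L`, equal to `⊥ = −∞` when the cokernel is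
infinite-dimensional (i.e. when `L` is not Fredholm). -/
noncomputable def fredholmIndex {X Y : Type*} [NormedAddCommGroup X] [NormedSpace ℝ X]
    [NormedAddCommGroup Y] [NormedSpace ℝ Y] (L : X →L[ℝ] Y) : WithBot ℤ :=
  if FiniteDimensional ℝ (Y ⧸ LinearMap.range (L : X →ₗ[ℝ] Y)) then
    (((finrank ℝ (LinearMap.ker (L : X →ₗ[ℝ] Y)) : ℤ) - (finrank ℝ (Y ⧸ LinearMap.range (L : X →ₗ[ℝ] Y)) : ℤ) : ℤ) :
      WithBot ℤ)
  else ⊥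

open Function

universe u

section LinearAlgebra

variable {K : Type*} [DivisionRing K]

theorem nonempty_linearEquiv_of_forall_injective_iff_surjective {V W : Type u}
    [AddCommGroup V] [Module K V] [AddCommGroup W] [Module K W]
    (h : ∀ g : V →ₗ[K] W, Injective g ↔ Surjective g) : Nonempty (V ≃ₗ[K] W) := by
  rcases lt_trichotomy (Module.rank K V) (Module.rank K W) with hlt | heq | hgt
  · obtain ⟨g, hg⟩ := Module.Free.exists_linearMap_injective_of_rank_lt hlt
    exact ⟨.ofBijective g ⟨hg, (h g).1 hg⟩⟩
  · exact nonempty_linearEquiv_of_rank_eq heq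
  · obtain ⟨f, hf⟩ := Module.Free.exists_linearMap_injective_of_rank_lt hgt
    obtain ⟨g, hgf⟩ := f.exists_leftInverse_of_injective (LinearMap.ker_eq_bot.2 hf)
    have hg : Surjective g := fun w ↦ ⟨f w, LinearMap.congr_fun hgf w⟩
    exact ⟨.ofBijective g ⟨(h g).2 hg, hg⟩⟩

variable {U V W : Type*} [AddCommGroup U] [Module K U] [AddCommGroup V] [Module K V]
  [AddCommGroup W] [Module K W]

-- Dimensions are compared in `ℕ∞` through `Cardinal.toENat`, which is blind to universe levels
-- and records an infinite dimension as `⊤`.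
theorem Module.toENat_rank_eq_finrank [FiniteDimensional K V] :
    (Module.rank K V).toENat = finrank K V := by
  rw [← Module.finrank_eq_rank, Cardinal.toENat_nat]

theorem Module.toENat_rank_eq_top_iff :
    (Module.rank K V).toENat = ⊤ ↔ ¬FiniteDimensional K V := by
  rw [Cardinal.toENat_eq_top, ← not_lt, Module.rank_lt_aleph0_iff]

theorem LinearEquiv.toENat_rank_eq (e : V ≃ₗ[K] W) :
    (Module.rank K V).toENat = (Module.rank K W).toENat := by
  simpa using congrArg Cardinal.toENat e.lift_rank_eq

theorem LinearMap.toENat_rank_range_add_toENat_rank_ker (f : V →ₗ[K] W) :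
    (Module.rank K f.range).toENat + (Module.rank K f.ker).toENat =
      (Module.rank K V).toENat := by
  rw [← f.quotKerEquivRange.toENat_rank_eq, ← map_add, Submodule.rank_quotient_add_rank]

/-- Additivity of the index `dim ker - dim coker` under composition, written without subtraction
so that it holds in all dimensions. It comes from the exact sequence
`0 → ker f → ker (g ∘ f) → ker g → coker f → coker (g ∘ f) → coker g → 0`, split below into four
rank-nullity identities. -/
theorem LinearMap.toENat_rank_ker_comp_add_eq (f : U →ₗ[K] V) (g : V →ₗ[K] W) :
    (Module.rank K (g ∘ₗ f).ker).toENat + (Module.rank K (V ⧸ f.range)).toENat +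
        (Module.rank K (W ⧸ g.range)).toENat =
      (Module.rank K f.ker).toENat + (Module.rank K g.ker).toENat +
        (Module.rank K (W ⧸ (g ∘ₗ f).range)).toENat := by
  have hfg : f.range ≤ (g ∘ₗ f).range.comap g := by
    rintro - ⟨u, rfl⟩
    exact ⟨u, rfl⟩
  set gbar := f.range.mapQ (g ∘ₗ f).range g hfg
  have hgf : (g ∘ₗ f).range ≤ g.range.comap LinearMap.id := by
    rintro - ⟨u, rfl⟩
    exact ⟨f u, rfl⟩
  have hker_comp := (f.domRestrict (g ∘ₗ f).ker).toENat_rank_range_add_toENat_rank_ker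
  rw [LinearMap.range_domRestrict, LinearMap.ker_comp, Submodule.map_comap_eq,
    LinearMap.ker_domRestrict, ← LinearMap.ker_comp,
    (Submodule.comapSubtypeEquivOfLe (LinearMap.ker_le_ker_comp f g)).toENat_rank_eq]
    at hker_comp
  have hcoker_f := gbar.toENat_rank_range_add_toENat_rank_ker
  have hcoker_comp :=
    ((g ∘ₗ f).range.mapQ g.range LinearMap.id hgf).toENat_rank_range_add_toENat_rank_ker
  rw [Submodule.range_mapQ, LinearMap.range_id, Submodule.map_top, Submodule.range_mkQ,
    Submodule.topEquiv.toENat_rank_eq, Submodule.ker_mapQ, Submodule.comap_id,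
    ← Submodule.range_mapQ f.range _ g hfg] at hcoker_comp
  have hker_gbar : (f.range.mkQ ∘ₗ g.ker.subtype).range = gbar.ker := by
    rw [LinearMap.range_comp, Submodule.range_subtype, Submodule.ker_mapQ]
    refine le_antisymm
      (Submodule.map_mono fun w hw ↦ ⟨0, by simp [LinearMap.mem_ker.1 hw]⟩) ?_
    rintro - ⟨w, ⟨u, hu⟩, rfl⟩
    refine ⟨w - f u, by simp [← hu], ?_⟩
    simp
  have hker_g := (f.range.mkQ ∘ₗ g.ker.subtype).toENat_rank_range_add_toENat_rank_ker
  rw [hker_gbar, LinearMap.ker_comp, Submodule.ker_mkQ,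
    (Submodule.equivMapOfInjective _ g.ker.injective_subtype _).toENat_rank_eq,
    Submodule.map_comap_subtype] at hker_g
  rw [← hker_comp, ← hcoker_f, ← hcoker_comp, ← hker_g, inf_comm]
  ring

end LinearAlgebra

section Perturbation

variable {R V W : Type*} [Ring R] [AddCommGroup V] [Module R V] [AddCommGroup W] [Module R W]

theorem LinearMap.injective_add_comp_iff_injective_mkQ_comp (U : V →ₗ[R] W)
    {p : V →ₗ[R] U.ker} (hp : ∀ n : U.ker, p n = n) (θ : U.ker →ₗ[R] W) :
    Injective (U + θ ∘ₗ p) ↔ Injective (U.range.mkQ ∘ₗ θ) := by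
  have hpU : ∀ x, U (p x) = 0 := fun x ↦ (p x).2
  simp only [injective_iff_map_eq_zero]
  constructor
  · intro h n hn
    obtain ⟨x, hx⟩ : θ n ∈ U.range := (Submodule.Quotient.mk_eq_zero _).1 hn
    have hz : p ((n : V) - x + p x) = n := by simp [hp]
    have := h ((n : V) - x + p x) (by simp [hz, hpU, hx])
    simpa [hz] using congrArg p this
  · intro h x hx
    have hpx : p x = 0 := h _ <| (Submodule.Quotient.mk_eq_zero _).2
      ⟨-x, by simpa [neg_eq_iff_eq_neg, eq_neg_iff_add_eq_zero, add_comm] using hx⟩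
    have hxker : x ∈ U.ker := by simpa [hpx] using hx
    have := hp ⟨x, hxker⟩
    simp only [hpx] at this
    exact (congrArg Subtype.val this).symm

theorem LinearMap.surjective_add_comp_iff_surjective_mkQ_comp (U : V →ₗ[R] W)
    {p : V →ₗ[R] U.ker} (hp : ∀ n : U.ker, p n = n) (θ : U.ker →ₗ[R] W) :
    Surjective (U + θ ∘ₗ p) ↔ Surjective (U.range.mkQ ∘ₗ θ) := by
  have hpU : ∀ x, U (p x) = 0 := fun x ↦ (p x).2
  constructor
  · intro h q
    obtain ⟨y, rfl⟩ := U.range.mkQ_surjective q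
    obtain ⟨x, rfl⟩ := h y
    refine ⟨p x, (Submodule.Quotient.eq _).2 ⟨-x, ?_⟩⟩
    simp
  · intro h y
    obtain ⟨n, hn⟩ := h (U.range.mkQ y)
    obtain ⟨x, hx⟩ : y - θ n ∈ U.range := (Submodule.Quotient.eq _).1 hn.symm
    have hz : p (x - p x + n) = n := by simp [hp]
    exact ⟨x - p x + n, by simp [hz, hpU, hx]⟩

end Perturbation

section CompactOperators

variable {𝕜 : Type*} [RCLike 𝕜] {X Y : Type*} [NormedAddCommGroup X] [NormedSpace 𝕜 X]
  [NormedAddCommGroup Y] [NormedSpace 𝕜 Y]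

theorem ContinuousLinearMap.isCompactOperator_of_finiteDimensional_range (f : X →L[𝕜] Y)
    [FiniteDimensional 𝕜 f.range] : IsCompactOperator f :=
  (isCompactOperator_of_locallyCompactSpace_dom f.rangeRestrict).clm_comp f.range.subtypeL

theorem IsCompactOperator.finiteDimensional_ker_one_sub {C : X →L[𝕜] X}
    (hC : IsCompactOperator C) : FiniteDimensional 𝕜 (1 - C).ker := by
  have hfix : ∀ x ∈ (1 - C).ker, C x = x := fun x hx ↦
    (sub_eq_zero.1 (show x - C x = 0 from hx)).symm
  have hinv : ∀ x ∈ (1 - C).ker, (C : X →ₗ[𝕜] X) x ∈ (1 - C).ker := fun x hx ↦ by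
    rwa [ContinuousLinearMap.coe_coe, hfix x hx]
  have hid : ⇑((C : X →ₗ[𝕜] X).restrict hinv) = id :=
    funext fun x ↦ Subtype.ext (hfix x x.2)
  have := (hC : IsCompactOperator (C : X →ₗ[𝕜] X)).restrict hinv (1 - C).isClosed_ker
  rw [hid] at this
  exact .of_isCompactOperator_id this

variable [CompleteSpace X]

theorem IsCompactOperator.surjective_one_sub_of_injective {C : X →L[𝕜] X}
    (hC : IsCompactOperator C) (hinj : Injective (1 - C : X →L[𝕜] X)) :
    Surjective (1 - C : X →L[𝕜] X) := by
  rcases hC.hasEigenvalue_or_mem_resolventSet one_ne_zero with h | h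
  · obtain ⟨x, hx⟩ := h.exists_hasEigenvector
    refine absurd (hinj (a₂ := 0) ?_) hx.2
    simpa [sub_eq_zero] using hx.apply_eq_smul.symm
  · rw [spectrum.mem_resolventSet_iff, map_one] at h
    exact (ContinuousLinearMap.isUnit_iff_bijective.1 h).2

/-- If `1 - C` is onto, its inverse `J` on a closed complement of the kernel satisfies
`J = 1 + C ∘ J`, so it is again of the form `1 - compact`; being injective, it is onto, which
forces the kernel to vanish. -/
theorem IsCompactOperator.injective_one_sub_of_surjective {C : X →L[𝕜] X}
    (hC : IsCompactOperator C) (hsurj : Surjective (1 - C : X →L[𝕜] X)) :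
    Injective (1 - C : X →L[𝕜] X) := by
  have := hC.finiteDimensional_ker_one_sub
  obtain ⟨X₁, hX₁c, hX₁⟩ :=
    (Submodule.ClosedComplemented.of_finiteDimensional (1 - C).ker).exists_isClosed_isCompl
  have := hX₁c.completeSpace_coe
  set f : X₁ →L[𝕜] X := (1 - C) ∘L X₁.subtypeL
  have hf_ker : f.ker = ⊥ := by
    rw [LinearMap.ker_eq_bot']
    intro x hx
    have : (x : X) ∈ (1 - C).ker ⊓ X₁ := ⟨hx, x.2⟩
    rw [hX₁.inf_eq_bot] at this
    exact Subtype.ext this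
  have hf_range : f.range = ⊤ := by
    refine Submodule.eq_top_iff'.2 fun y ↦ ?_
    obtain ⟨x, rfl⟩ := hsurj y
    obtain ⟨k, hk, x₁, hx₁, rfl⟩ :=
      Submodule.mem_sup.1 (hX₁.sup_eq_top ▸ Submodule.mem_top : x ∈ _)
    have hCk : C k = k := (sub_eq_zero.1 (show k - C k = 0 from hk)).symm
    exact ⟨⟨x₁, hx₁⟩, by simp only [f]; simp [hCk]⟩
  set J : X →L[𝕜] X :=
    X₁.subtypeL ∘L (ContinuousLinearEquiv.ofBijective f hf_ker hf_range).symm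
  have hJ : J = 1 - -(C ∘L J) := by
    ext y
    have h := ContinuousLinearEquiv.ofBijective_apply_symm_apply f hf_ker hf_range y
    simp only [f, J, ContinuousLinearMap.sub_comp, sub_apply, ContinuousLinearMap.comp_apply,
      Submodule.coe_subtypeL, Submodule.subtype_apply, one_apply_eq_self,
      ContinuousLinearEquiv.coe_coe, sub_neg_eq_add, add_apply] at h ⊢
    exact eq_add_of_sub_eq h
  have hJ_surj : Surjective J := by
    have hJ_inj : Injective J := Subtype.val_injective.comp (ContinuousLinearEquiv.injective _)
    rw [hJ] at hJ_inj ⊢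
    exact (hC.comp_clm J).neg.surjective_one_sub_of_injective hJ_inj
  have hX₁_top : X₁ = ⊤ := Submodule.eq_top_iff'.2 fun x ↦ by
    obtain ⟨y, rfl⟩ := hJ_surj x
    exact Subtype.coe_prop _
  rw [← ContinuousLinearMap.coe_coe, ← LinearMap.ker_eq_bot, ← inf_top_eq (1 - C).ker,
    ← hX₁_top, hX₁.inf_eq_bot]

/-- Lift `g` to `θ : ker (1 - C) → X` and let `p` be a continuous projection onto the kernel. The
perturbation `1 - C + θ ∘ p` is injective, resp. surjective, exactly when `g` is, and it is again
of the form `1 - compact`, so the Fredholm alternative applies to it. -/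
theorem IsCompactOperator.injective_iff_surjective_of_ker_one_sub {C : X →L[𝕜] X}
    (hC : IsCompactOperator C) (g : (1 - C).ker →ₗ[𝕜] X ⧸ (1 - C).range) :
    Injective g ↔ Surjective g := by
  have := hC.finiteDimensional_ker_one_sub
  obtain ⟨p, hp⟩ := Submodule.ClosedComplemented.of_finiteDimensional (1 - C).ker
  obtain ⟨θ, rfl⟩ := Module.projective_lifting_property _ g (1 - C).range.mkQ_surjective
  set θL : (1 - C).ker →L[𝕜] X := LinearMap.toContinuousLinearMap θ
  have hC' : IsCompactOperator (C - θL ∘L p) :=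
    hC.sub ((isCompactOperator_of_locallyCompactSpace_dom p).clm_comp θL)
  have hU : ⇑(1 - (C - θL ∘L p)) =
      ⇑((1 - C : X →L[𝕜] X) + θ ∘ₗ (p : X →ₗ[𝕜] _)) := by
    ext x
    simp only [θL, sub_sub_eq_add_sub, add_apply, sub_apply, one_apply_eq_self,
      ContinuousLinearMap.comp_apply, LinearMap.coe_toContinuousLinearMap', LinearMap.add_apply,
      ContinuousLinearMap.coe_coe, LinearMap.coe_comp, Function.comp_apply]
    abel
  rw [← LinearMap.injective_add_comp_iff_injective_mkQ_comp _ hp,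
    ← LinearMap.surjective_add_comp_iff_surjective_mkQ_comp _ hp, ← hU]
  exact ⟨hC'.surjective_one_sub_of_injective, hC'.injective_one_sub_of_surjective⟩

theorem IsCompactOperator.nonempty_ker_one_sub_equiv_quotient_range {C : X →L[𝕜] X}
    (hC : IsCompactOperator C) : Nonempty ((1 - C).ker ≃ₗ[𝕜] X ⧸ (1 - C).range) :=
  nonempty_linearEquiv_of_forall_injective_iff_surjective hC.injective_iff_surjective_of_ker_one_sub

theorem IsCompactOperator.exists_comp_one_sub_eq_one_sub {C : X →L[𝕜] X}
    (hC : IsCompactOperator C) :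
    ∃ G F : X →L[𝕜] X, FiniteDimensional 𝕜 F.range ∧ G ∘L (1 - C) = 1 - F := by
  obtain ⟨g⟩ := hC.nonempty_ker_one_sub_equiv_quotient_range
  have := hC.finiteDimensional_ker_one_sub
  obtain ⟨p, hp⟩ := Submodule.ClosedComplemented.of_finiteDimensional (1 - C).ker
  obtain ⟨θ, hθ⟩ := Module.projective_lifting_property _ (g : (1 - C).ker →ₗ[𝕜] _)
    (1 - C).range.mkQ_surjective
  set θL : (1 - C).ker →L[𝕜] X := LinearMap.toContinuousLinearMap θ
  set V : X →L[𝕜] X := (1 - C) + θL ∘L p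
  have hV_ker : V.ker = ⊥ := LinearMap.ker_eq_bot.2 <|
    (LinearMap.injective_add_comp_iff_injective_mkQ_comp _ hp θ).2 (hθ ▸ g.injective)
  have hV_range : V.range = ⊤ := LinearMap.range_eq_top.2 <|
    (LinearMap.surjective_add_comp_iff_surjective_mkQ_comp _ hp θ).2 (hθ ▸ g.surjective)
  set e := ContinuousLinearEquiv.ofBijective V hV_ker hV_range
  refine ⟨e.symm, e.symm ∘L θL ∘L p, ?_, ?_⟩
  · exact Submodule.finiteDimensional_of_le (S₂ := ((e.symm : X →L[𝕜] X) ∘L θL).range)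
      (by rintro - ⟨x, rfl⟩; exact ⟨p x, rfl⟩)
  · ext x
    have hx : (1 - C) x = e x - θL (p x) := (add_sub_cancel_right _ _).symm
    change e.symm ((1 - C) x) = x - e.symm (θL (p x))
    rw [hx, map_sub, e.symm_apply_apply]

/-- Since `ind (1 - C) = 0`, additivity of the index gives `ind T = -ind S`. -/
theorem IsCompactOperator.toENat_rank_add_eq_of_comp_eq_one_sub {T : X →L[𝕜] Y}
    {S : Y →L[𝕜] X} {C : X →L[𝕜] X} (hC : IsCompactOperator C) (h : S ∘L T = 1 - C) :
    (Module.rank 𝕜 (Y ⧸ T.range)).toENat + (Module.rank 𝕜 (X ⧸ S.range)).toENat =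
      (Module.rank 𝕜 T.ker).toENat + (Module.rank 𝕜 S.ker).toENat := by
  have hadd := (T : X →ₗ[𝕜] Y).toENat_rank_ker_comp_add_eq (S : Y →ₗ[𝕜] X)
  rw [show (S : Y →ₗ[𝕜] X) ∘ₗ (T : X →ₗ[𝕜] Y) = (1 - C : X →L[𝕜] X) from
    congrArg ContinuousLinearMap.toLinearMap h] at hadd
  obtain ⟨e⟩ := hC.nonempty_ker_one_sub_equiv_quotient_range
  have := hC.finiteDimensional_ker_one_sub
  rw [← e.toENat_rank_eq] at hadd
  refine ENat.add_right_injective_of_ne_top (n := (Module.rank 𝕜 (1 - C).ker).toENat) ?_ ?_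
  · rw [Module.toENat_rank_eq_finrank]
    exact ENat.natCast_ne_top _
  · simp only
    rw [← add_assoc, hadd, add_comm]

end CompactOperators

/-- If `P` projects onto `p` and `ρ` onto the finite-dimensional `(1 - P) q`, then
`P + ρ ∘ (1 - P)` projects onto `p ⊔ q`. -/
theorem Submodule.ClosedComplemented.sup_of_finiteDimensional {𝕜 E : Type*} [RCLike 𝕜]
    [NormedAddCommGroup E] [NormedSpace 𝕜 E] {p q : Submodule 𝕜 E} (hp : p.ClosedComplemented)
    [FiniteDimensional 𝕜 q] : (p ⊔ q).ClosedComplemented := by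
  obtain ⟨r, hr⟩ := hp
  set P : E →L[𝕜] E := p.subtypeL ∘L r
  set D := q.map ((1 - P : E →L[𝕜] E) : E →ₗ[𝕜] E)
  obtain ⟨ρ, hρ⟩ := Submodule.ClosedComplemented.of_finiteDimensional D
  have hD : D ≤ p ⊔ q := by
    rintro - ⟨b, hb, rfl⟩
    exact Submodule.sub_mem _ (Submodule.mem_sup_right hb) (Submodule.mem_sup_left (r b).2)
  refine ⟨(P + D.subtypeL ∘L ρ ∘L (1 - P)).codRestrict (p ⊔ q) fun y ↦
    Submodule.add_mem _ (Submodule.mem_sup_left (r y).2) (hD (ρ _).2), ?_⟩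
  rintro ⟨y, hy⟩
  obtain ⟨a, ha, b, hb, rfl⟩ := Submodule.mem_sup.1 hy
  have hPa : P a = a := congrArg Subtype.val (hr ⟨a, ha⟩)
  have hmem : (1 - P) (a + b) ∈ D := ⟨b, hb, by simp [hPa]⟩
  have hρy : (ρ ((1 - P) (a + b)) : E) = (1 - P) (a + b) :=
    congrArg Subtype.val (hρ ⟨_, hmem⟩)
  apply Subtype.ext
  change P (a + b) + (ρ ((1 - P) (a + b)) : E) = a + b
  rw [hρy, sub_apply, one_apply_eq_self, add_sub_cancel]

section LeftFredholm

variable {X Y : Type*} [NormedAddCommGroup X] [NormedSpace ℝ X] [NormedAddCommGroup Y]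
  [NormedSpace ℝ Y]

/-- `G ∘ T` is the identity on the closed finite-codimensional subspace `ker F`, so `T` restricted
to it has a continuous left inverse; the rest of `range T` is finite-dimensional. -/
theorem LeftFredholm.of_comp_eq_one_sub_finiteRank {T : X →L[ℝ] Y}
    {G : Y →L[ℝ] X} {F : X →L[ℝ] X} [FiniteDimensional ℝ F.range] (h : G ∘L T = 1 - F) :
    LeftFredholm T := by
  have hGT : ∀ x, G (T x) = x - F x := fun x ↦ by simpa using congrArg (· x) h
  have : FiniteDimensional ℝ T.ker := Submodule.finiteDimensional_of_le (S₂ := F.range)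
    fun x hx ↦ ⟨x, by
      have := hGT x
      rwa [show T x = 0 from hx, map_zero, eq_comm, sub_eq_zero, eq_comm] at this⟩
  have : FiniteDimensional ℝ (X ⧸ F.ker) := F.quotKerEquivRange.symm.finiteDimensional
  obtain ⟨π, hπ⟩ := Submodule.ClosedComplemented.of_finiteDimensional_quotient F.isClosed_ker
  have hleft : (T ∘L F.ker.subtypeL).HasLeftInverse := ⟨π ∘L G, fun a ↦ by
    simp [hGT, show F a = 0 from a.2, hπ]⟩
  obtain ⟨B, hB⟩ := F.ker.exists_isCompl
  have : FiniteDimensional ℝ B := (F.ker.quotientEquivOfIsCompl B hB).finiteDimensional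
  have hrange : T.range = (T ∘L F.ker.subtypeL).range ⊔ B.map (T : X →ₗ[ℝ] Y) := by
    rw [LinearMap.range_eq_map, ← hB.sup_eq_top, Submodule.map_sup,
      ← LinearMap.range_domRestrict]
    rfl
  have hT : T.range.ClosedComplemented :=
    hrange ▸ hleft.closedComplemented_range.sup_of_finiteDimensional
  exact ⟨inferInstance,
    (Submodule.ClosedComplemented.of_finiteDimensional T.ker).exists_isClosed_isCompl,
    hT.isClosed, hT.exists_isClosed_isCompl⟩

theorem LeftFredholm.of_comp_eq_one_sub_compact [CompleteSpace X] {T : X →L[ℝ] Y}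
    {S : Y →L[ℝ] X} {C : X →L[ℝ] X} (hC : IsCompactOperator C) (h : S ∘L T = 1 - C) :
    LeftFredholm T := by
  obtain ⟨G, F, hF, hGF⟩ := hC.exists_comp_one_sub_eq_one_sub
  exact .of_comp_eq_one_sub_finiteRank (G := G ∘L S)
    (by rw [ContinuousLinearMap.comp_assoc, h, hGF])

theorem LeftFredholm.exists_leftParametrix [CompleteSpace X] [CompleteSpace Y] {L : X →L[ℝ] Y}
    (hL : LeftFredholm L) : ∃ S : Y →L[ℝ] X,
      (∀ x, x - S (L x) ∈ L.ker) ∧ IsCompl L.range S.ker ∧ IsCompl L.ker S.range := by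
  obtain ⟨-, ⟨X₁, hX₁c, hX₁⟩, hRc, ⟨Y₂, hY₂c, hY₂⟩⟩ := hL
  have := hX₁c.completeSpace_coe
  set L₁ := L ∘L X₁.subtypeL
  have hL₁_range : L₁.range = L.range := by
    rw [← Submodule.map_eq_range_iff.2 hX₁.symm.codisjoint, ← LinearMap.range_domRestrict]
    rfl
  have hL₁_inj : Injective L₁ := by
    rw [← ContinuousLinearMap.coe_coe, ← LinearMap.ker_eq_bot, LinearMap.ker_eq_bot']
    intro x hx
    have : (x : X) ∈ L.ker ⊓ X₁ := ⟨hx, x.2⟩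
    rw [hX₁.inf_eq_bot] at this
    exact Subtype.ext this
  rw [← hL₁_range] at hRc hY₂ ⊢
  set e := L₁.equivRange hL₁_inj (by simpa [LinearMap.coe_range] using hRc)
  have hπ := Submodule.IsCompl.isTopCompl_of_isClosed hY₂ hRc hY₂c
  set π := L₁.range.projectionOntoL Y₂ hπ
  set S := X₁.subtypeL ∘L (e.symm : L₁.range →L[ℝ] X₁) ∘L π
  have hLS : ∀ y, L (S y) = π y := fun y ↦ congrArg Subtype.val (e.apply_symm_apply (π y))
  have hS_ker : S.ker = Y₂ := by
    ext y
    simp [S, π]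
  have hS_range : S.range = X₁ := by
    ext x
    refine ⟨fun ⟨y, hy⟩ ↦ hy ▸ (e.symm (π y)).2, fun hx ↦ ?_⟩
    obtain ⟨y, hy⟩ := Submodule.projectionOntoL_surjective hπ (e ⟨x, hx⟩)
    refine ⟨y, ?_⟩
    change ((e.symm (π y) : X₁) : X) = x
    rw [hy, e.symm_apply_apply]
  refine ⟨S, fun x ↦ ?_, hS_ker ▸ hY₂, hS_range ▸ hX₁⟩
  have hLx : L x ∈ L₁.range := hL₁_range ▸ LinearMap.mem_range_self _ x
  rw [LinearMap.mem_ker, map_sub]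
  simp [hLS, π, Submodule.projectionOntoL_apply_left _ ⟨_, hLx⟩]

theorem fredholmIndex_eq_of_toENat_rank_add_eq {T L : X →L[ℝ] Y} [FiniteDimensional ℝ T.ker]
    [FiniteDimensional ℝ L.ker]
    (h : (Module.rank ℝ (Y ⧸ T.range)).toENat + (Module.rank ℝ L.ker).toENat =
      (Module.rank ℝ T.ker).toENat + (Module.rank ℝ (Y ⧸ L.range)).toENat) :
    fredholmIndex T = fredholmIndex L := by
  rw [toENat_rank_eq_finrank (V := T.ker), toENat_rank_eq_finrank (V := L.ker)] at h
  unfold fredholmIndex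
  split_ifs with hT hL hL
  · rw [toENat_rank_eq_finrank (V := Y ⧸ T.range), toENat_rank_eq_finrank (V := Y ⧸ L.range)]
      at h
    norm_cast at h
    congr 1
    omega
  · rw [toENat_rank_eq_top_iff.2 hL, toENat_rank_eq_finrank (V := Y ⧸ T.range)] at h
    simp at h
  · rw [toENat_rank_eq_top_iff.2 hT, toENat_rank_eq_finrank (V := Y ⧸ L.range)] at h
    simp [eq_comm] at h
  · rfl

end LeftFredholm

/-- the sum of a left-Fredholm operator and a compact operator between Banach
spaces is left-Fredholm with the same index. -/
theorem stmt_4 {X Y : Type*}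
    [NormedAddCommGroup X] [NormedSpace ℝ X] [CompleteSpace X]
    [NormedAddCommGroup Y] [NormedSpace ℝ Y] [CompleteSpace Y]
    (L : X →L[ℝ] Y) (hL : LeftFredholm L)
    (K : X →L[ℝ] Y) (hK : IsCompactOperator K) :
    LeftFredholm (L + K) ∧ fredholmIndex (L + K) = fredholmIndex L := by
  obtain ⟨S, hSL, hRS, hNS⟩ := hL.exists_leftParametrix
  have := hL.1
  have : FiniteDimensional ℝ (1 - S ∘L L).range :=
    Submodule.finiteDimensional_of_le (S₂ := L.ker) (by rintro - ⟨x, rfl⟩; exact hSL x)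
  have hC : IsCompactOperator (1 - S ∘L (L + K) : X →L[ℝ] X) := by
    rw [ContinuousLinearMap.comp_add, ← sub_sub]
    exact (1 - S ∘L L).isCompactOperator_of_finiteDimensional_range.sub (hK.clm_comp S)
  have hST : S ∘L (L + K) = 1 - (1 - S ∘L (L + K)) := (sub_sub_cancel _ _).symm
  have hT := LeftFredholm.of_comp_eq_one_sub_compact hC hST
  have := hT.1
  refine ⟨hT, fredholmIndex_eq_of_toENat_rank_add_eq ?_⟩
  have hind := hC.toENat_rank_add_eq_of_comp_eq_one_sub hST
  rwa [(Submodule.quotientEquivOfIsCompl _ _ hNS.symm).toENat_rank_eq,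
    ← (Submodule.quotientEquivOfIsCompl _ _ hRS).toENat_rank_eq] at hind
end

section
/- Let J ⊆ ℝ be a nonempty open interval, C a finite set of cells with state spaces ℝ^{d_c}, and c a fixed cell with input set T. Let x : J → ℝᵈ be a C¹ curve whose synchrony pattern t ↦ ⋈_{x(t)} is constant on J and such that d/dt (x_c(t), x_T(t)) never vanishes on J. Let B(c,c) be a finite set of permutations β of the input coordinates (acting on ℝ^{d_T} by pullback β*). Then there exist a nonempty open subinterval J* ⊆ J and an open ball B ⊆ ℝ^{d_c} × ℝ^{d_T} such that: (i) t ∈ J* ↦ (x_c(t), x_T(t)) is a C¹ diffeomorphism onto its image, contained in B; and (ii) for every β ∈ B(c,c), either (x_c(t), β*x_T(t)) = (x_c(t), x_T(t)) for all t ∈ J*, or (x_c(t), β*x_T(t)) ∉ B for all t ∈ J*. -/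
/-!
Fix `t₀ ∈ J` and put `z = (x_c(t₀), x_T(t₀))`. For each `β` with `β* x_T(t₀) ≠ x_T(t₀)` the point
`(x_c(t₀), β* x_T(t₀))` differs from `z`; there are finitely many such `β`, so a small ball `B`
around `z` stays away from all of them, and by continuity so do the curves `t ↦ (x_c(t), β* x_T(t))`
near `t₀`, while the curve itself stays in `B`. Since the synchrony pattern is constant, every other
`β ∈ B(c,c)` fixes `x_T` on all of `J`. Injectivity near `t₀`: a functional `ℓ` with
`ℓ(x'(t₀)) > 0` stays positive on `x'` nearby, so `ℓ ∘ x` is strictly increasing there.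
-/

open Set Filter Topology Metric

section Injectivity

variable {E : Type*} [NormedAddCommGroup E] [NormedSpace ℝ E]

theorem exists_clm_eventually_pos {α : Type*} [TopologicalSpace α] {v : α → E} {a : α}
    (hv : ContinuousAt v a) (hv0 : v a ≠ 0) :
    ∃ ℓ : E →L[ℝ] ℝ, ∀ᶠ t in 𝓝 a, 0 < ℓ (v t) := by
  obtain ⟨ℓ, -, hℓ⟩ := exists_dual_vector ℝ (v a) (norm_ne_zero_iff.2 hv0)
  have hpos : 0 < ℓ (v a) := hℓ ▸ norm_pos_iff.2 hv0
  exact ⟨ℓ, (ℓ.continuous.continuousAt.comp hv).eventually (eventually_gt_nhds hpos)⟩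

theorem Convex.injOn_of_hasDerivAt_of_clm_pos {f v : ℝ → E} {s : Set ℝ} (hs : Convex ℝ s)
    (ℓ : E →L[ℝ] ℝ) (hf : ∀ t ∈ s, HasDerivAt f (v t) t) (hpos : ∀ t ∈ s, 0 < ℓ (v t)) :
    InjOn f s := by
  have hℓf : ∀ t ∈ s, HasDerivAt (ℓ ∘ f) (ℓ (v t)) t :=
    fun t ht => ℓ.hasFDerivAt.comp_hasDerivAt t (hf t ht)
  have hmono : StrictMonoOn (ℓ ∘ f) s :=
    strictMonoOn_of_deriv_pos hs (fun t ht => (hℓf t ht).continuousAt.continuousWithinAt)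
      fun t ht => (hℓf t (interior_subset ht)).deriv ▸ hpos t (interior_subset ht)
  exact hmono.injOn.of_comp

end Injectivity

theorem exists_pos_eventually_forall_notMem_ball {ι α X : Type*} [Finite ι] [TopologicalSpace α]
    [MetricSpace X] {g : ι → α → X} {a : α} {z : X} (hg : ∀ i, ContinuousAt (g i) a)
    (hne : ∀ i, g i a ≠ z) :
    ∃ r > 0, ∀ᶠ t in 𝓝 a, ∀ i, g i t ∉ ball z r := by
  have hsmall : ∀ᶠ r in 𝓝[>] (0 : ℝ), ∀ i, r < dist (g i a) z / 2 :=
    eventually_all.2 fun i =>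
      nhdsWithin_le_nhds (eventually_lt_nhds (half_pos (dist_pos.2 (hne i))))
  obtain ⟨r, hrsmall, hrpos⟩ := (hsmall.and self_mem_nhdsWithin).exists
  refine ⟨r, hrpos, (eventually_all.2 fun i => (hg i).eventually (ball_mem_nhds _ hrpos)).mono ?_⟩
  intro t ht i hti
  linarith [dist_triangle_left (g i a) z (g i t), hrsmall i, mem_ball.1 (ht i), mem_ball.1 hti]

theorem stmt_10_general {T : Type*} [Fintype T] (dc e : ℕ)
    (J : Set ℝ) (hJo : IsOpen J) (hJne : J.Nonempty)
    (xc : ℝ → EuclideanSpace ℝ (Fin dc)) (xT : ℝ → T → EuclideanSpace ℝ (Fin e))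
    (v : ℝ → EuclideanSpace ℝ (Fin dc) × (T → EuclideanSpace ℝ (Fin e)))
    (hderiv : ∀ t ∈ J, HasDerivAt (fun s => (xc s, xT s)) (v t) t)
    (hvcont : ContinuousOn v J) (hvne : ∀ t ∈ J, v t ≠ 0)
    (Bcc : Set (Equiv.Perm T))
    (hsync : ∀ β ∈ Bcc, (∀ t ∈ J, xT t ∘ β = xT t) ∨ (∀ t ∈ J, xT t ∘ β ≠ xT t)) :
    ∃ a b : ℝ, a < b ∧ Set.Ioo a b ⊆ J ∧
      ∃ (z : EuclideanSpace ℝ (Fin dc) × (T → EuclideanSpace ℝ (Fin e))) (r : ℝ),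
        0 < r ∧
        Set.InjOn (fun t => (xc t, xT t)) (Set.Ioo a b) ∧
        (∀ t ∈ Set.Ioo a b, (xc t, xT t) ∈ Metric.ball z r) ∧
        ∀ β ∈ Bcc,
          (∀ t ∈ Set.Ioo a b, xT t ∘ β = xT t) ∨
          (∀ t ∈ Set.Ioo a b, (xc t, xT t ∘ β) ∉ Metric.ball z r) := by
  obtain ⟨t₀, ht₀⟩ := hJne
  have hJ : ∀ᶠ t in 𝓝 t₀, t ∈ J := hJo.mem_nhds ht₀
  set f := fun s => (xc s, xT s)
  have hf : ContinuousAt f t₀ := (hderiv t₀ ht₀).continuousAt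
  let g (β : {β // β ∈ Bcc ∧ xT t₀ ∘ β ≠ xT t₀}) (t : ℝ) := (xc t, xT t ∘ β.1)
  have hg (β) : ContinuousAt (g β) t₀ :=
    (continuous_fst.prodMk ((continuous_pi fun i => continuous_apply _).comp
      continuous_snd)).continuousAt.comp hf
  obtain ⟨r, hr, hsep⟩ := exists_pos_eventually_forall_notMem_ball hg
    (z := f t₀) fun β h => β.2.2 (congrArg Prod.snd h)
  obtain ⟨ℓ, hℓ⟩ := exists_clm_eventually_pos (hvcont.continuousAt hJ) (hvne t₀ ht₀)
  obtain ⟨ε, hε, hnear⟩ := eventually_nhds_iff_ball.1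
    (hJ.and (hℓ.and ((hf.eventually (ball_mem_nhds _ hr)).and hsep)))
  rw [Real.ball_eq_Ioo] at hnear
  refine ⟨t₀ - ε, t₀ + ε, by linarith, fun t ht => (hnear t ht).1, f t₀, r, hr,
    (convex_Ioo _ _).injOn_of_hasDerivAt_of_clm_pos ℓ (fun t ht => hderiv t (hnear t ht).1)
      fun t ht => (hnear t ht).2.1, fun t ht => (hnear t ht).2.2.1, fun β hβ => ?_⟩
  rcases hsync β hβ with hfix | hmove
  · exact Or.inl fun t ht => hfix t (hnear t ht).1
  · exact Or.inr fun t ht => (hnear t ht).2.2.2 ⟨β, hβ, hmove t₀ ht₀⟩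

/-- Lemma 1 of the paper: let `x = (xc, xT)` be a `C¹` curve on a nonempty
open interval `J` (cell `c` with state in `ℝ^dc` and inputs `T` with states in `ℝ^e`),
with nonvanishing derivative, whose synchrony pattern is constant on `J` (expressed here,
as allowed, by the hypothesis that for each input isomorphism `β` the pullback symmetry
`β* xT = xT` holds either for all `t ∈ J` or for no `t ∈ J`).  Then there are a nonempty
open subinterval `J* ⊆ J` and an open ball `B` such that (i) `t ↦ (xc t, xT t)` is a `C¹`
diffeomorphism onto its image on `J*`, with image contained in `B`, and (ii) for every
`β ∈ B(c,c)`, either `(xc t, β* xT t) = (xc t, xT t)` for all `t ∈ J*`, or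
`(xc t, β* xT t) ∉ B` for all `t ∈ J*`. -/
theorem stmt_10 {T : Type*} [Fintype T] (dc e : ℕ)
    (J : Set ℝ) (hJo : IsOpen J) (hJne : J.Nonempty) (hJc : J.OrdConnected)
    (xc : ℝ → EuclideanSpace ℝ (Fin dc)) (xT : ℝ → T → EuclideanSpace ℝ (Fin e))
    (v : ℝ → EuclideanSpace ℝ (Fin dc) × (T → EuclideanSpace ℝ (Fin e)))
    (hderiv : ∀ t ∈ J, HasDerivAt (fun s => (xc s, xT s)) (v t) t)
    (hvcont : ContinuousOn v J) (hvne : ∀ t ∈ J, v t ≠ 0)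
    (Bcc : Set (Equiv.Perm T))
    (hsync : ∀ β ∈ Bcc, (∀ t ∈ J, xT t ∘ β = xT t) ∨ (∀ t ∈ J, xT t ∘ β ≠ xT t)) :
    ∃ a b : ℝ, a < b ∧ Set.Ioo a b ⊆ J ∧
      ∃ (z : EuclideanSpace ℝ (Fin dc) × (T → EuclideanSpace ℝ (Fin e))) (r : ℝ),
        0 < r ∧
        Set.InjOn (fun t => (xc t, xT t)) (Set.Ioo a b) ∧
        (∀ t ∈ Set.Ioo a b, (xc t, xT t) ∈ Metric.ball z r) ∧
        ∀ β ∈ Bcc,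
          (∀ t ∈ Set.Ioo a b, xT t ∘ β = xT t) ∨
          (∀ t ∈ Set.Ioo a b, (xc t, xT t ∘ β) ∉ Metric.ball z r) :=
  stmt_10_general dc e J hJo hJne xc xT v hderiv hvcont hvne Bcc hsync
end

section
/- Let X, Y be finite-dimensional vector spaces with dim X < dim Y, and let Φ : X × Λ → Y be a C¹ map on a product with a Banach space Λ such that at every point (x, λ) ∈ Φ⁻¹(0), the total derivative DΦ(x,λ) : X × Λ → Y is surjective. Assume Λ is separable. Then the set of λ ∈ Λ such that Φ(·, λ)⁻¹(0) = ∅ is generic (contains a dense G_δ) in Λ. -/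
/-!
Fix a compact `K ⊆ X` and a parameter `λ₀`. Since `Y` is finite-dimensional, finitely many
directions `s ⊆ Λ` already make `DΦ` surjective at every zero over `K`, so on the finite-dimensional
slice `G (x, v) = Φ (x, λ₀ + v)`, `v ∈ V = span s`, the derivative stays surjective at all zeros
over `K` for small `v` (surjectivity is an open condition). By the implicit function theorem those
zeros form a set of Hausdorff dimension at most `dim X + dim V - dim Y < dim V`, so their
projection to `V` has dense complement, and arbitrarily small `v` leave `Φ (·, λ₀ + v)` without
zeros over `K`. This set of parameters is also open (tube lemma); exhausting `X` by closed balls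
gives the countable family.
-/

open Set Module Metric Filter Function Topology Submodule

section ZeroSet

variable {E F : Type*} [NormedAddCommGroup E] [NormedSpace ℝ E] [FiniteDimensional ℝ E]
  [NormedAddCommGroup F] [NormedSpace ℝ F] [FiniteDimensional ℝ F]

theorem HasStrictFDerivAt.exists_mem_nhds_dimH_preimage_inter_le {f : E → F} {f' : E →L[ℝ] F}
    {a : E} (hf : HasStrictFDerivAt f f' a) (hf' : f'.range = ⊤) :
    ∃ W ∈ 𝓝 a, dimH (f ⁻¹' {f a} ∩ W) ≤ finrank ℝ f'.ker := by
  obtain ⟨C, t, ht, hg⟩ := (hf.to_implicitFunction hf').exists_lipschitzOnWith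
  have hφ : Tendsto (fun x => (hf.implicitToOpenPartialHomeomorph f f' hf' x).2) (𝓝 a) (𝓝 0) := by
    have := ((hf.implicitToOpenPartialHomeomorph f f' hf').continuousAt
      (hf.mem_implicitToOpenPartialHomeomorph_source hf')).snd
    rwa [ContinuousAt, hf.implicitToOpenPartialHomeomorph_self hf'] at this
  refine ⟨_, (hφ.eventually_mem ht).and (hf.eq_implicitFunction hf'), ?_⟩
  calc dimH (f ⁻¹' {f a} ∩ _)
      ≤ dimH (hf.implicitFunction f f' hf' (f a) '' t) := by
        refine dimH_mono ?_
        rintro x ⟨hx, hxt, hx_eq⟩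
        rw [mem_singleton_iff.1 hx] at hx_eq
        exact ⟨_, hxt, hx_eq⟩
    _ ≤ dimH t := hg.dimH_image_le
    _ ≤ dimH (univ : Set f'.ker) := dimH_mono (subset_univ t)
    _ = finrank ℝ f'.ker := Real.dimH_univ_eq_finrank _

theorem ContDiff.dimH_setOf_eq_and_surjective_le {f : E → F} (hf : ContDiff ℝ 1 f) (c : F) :
    dimH {x | f x = c ∧ Surjective (fderiv ℝ f x)} ≤ (finrank ℝ E - finrank ℝ F : ℕ) := by
  refine not_lt.1 fun hlt => ?_
  obtain ⟨a, ⟨rfl, ha⟩, hlocal⟩ := exists_mem_nhdsWithin_lt_dimH_of_lt_dimH hlt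
  have hrange : (fderiv ℝ f a).range = ⊤ := LinearMap.range_eq_top.2 ha
  have hker : finrank ℝ (fderiv ℝ f a).ker = finrank ℝ E - finrank ℝ F := by
    have := LinearMap.finrank_range_add_finrank_ker (fderiv ℝ f a : E →ₗ[ℝ] F)
    rw [hrange, finrank_top] at this
    omega
  obtain ⟨W, hW, hdim⟩ :=
    (hf.contDiffAt.hasStrictFDerivAt one_ne_zero).exists_mem_nhds_dimH_preimage_inter_le hrange
  refine (hlocal _ (inter_mem_nhdsWithin _ hW)).not_ge ?_
  calc dimH ({x | f x = f a ∧ Surjective (fderiv ℝ f x)} ∩ W)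
      ≤ dimH (f ⁻¹' {f a} ∩ W) := dimH_mono fun x hx => ⟨hx.1.1, hx.2⟩
    _ ≤ _ := hker ▸ hdim

end ZeroSet

theorem ContinuousLinearMap.isOpen_setOf_surjective {𝕜 E F : Type*} [NontriviallyNormedField 𝕜]
    [CompleteSpace 𝕜] [NormedAddCommGroup E] [NormedSpace 𝕜 E] [NormedAddCommGroup F]
    [NormedSpace 𝕜 F] [FiniteDimensional 𝕜 F] :
    IsOpen {L : E →L[𝕜] F | Surjective L} := by
  refine isOpen_iff_mem_nhds.2 fun L hL => ?_
  set b := Module.finBasis 𝕜 F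
  choose w hw using fun i => hL (b i)
  have hcont : Continuous fun L' : E →L[𝕜] F => fun i => L' (w i) := by fun_prop
  have hindep : ∀ᶠ L' in 𝓝 L, LinearIndependent 𝕜 fun i => L' (w i) :=
    hcont.continuousAt.eventually (p := fun v => LinearIndependent 𝕜 v)
      (by simpa only [funext hw] using b.linearIndependent.eventually)
  filter_upwards [hindep] with L' hL'
  have hspan := hL'.span_eq_top_of_card_eq_finrank' (by simp)
  refine LinearMap.range_eq_top.1 (top_le_iff.1 (hspan ▸ Submodule.span_le.2 ?_))
  rintro _ ⟨i, rfl⟩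
  exact ⟨w i, rfl⟩

theorem IsCompact.isOpen_setOf_forall_prodMk_mem {X Y : Type*} [TopologicalSpace X]
    [TopologicalSpace Y] {K : Set X} (hK : IsCompact K) {O : Set (X × Y)} (hO : IsOpen O) :
    IsOpen {y | ∀ x ∈ K, (x, y) ∈ O} :=
  isOpen_iff_mem_nhds.2 fun _ hy => hK.eventually_forall_of_forall_eventually fun x hx =>
    (hO.preimage continuous_swap).mem_nhds (hy x hx)

section Reduction

variable {X Λ Y : Type*} [NormedAddCommGroup X] [NormedSpace ℝ X]
  [NormedAddCommGroup Λ] [NormedSpace ℝ Λ] [NormedAddCommGroup Y] [NormedSpace ℝ Y]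

theorem surjective_comp_prodMap_subtypeL_of_le {L : X × Λ →L[ℝ] Y} {V W : Submodule ℝ Λ}
    (hVW : V ≤ W) (hV : Surjective (L.comp ((ContinuousLinearMap.id ℝ X).prodMap V.subtypeL))) :
    Surjective (L.comp ((ContinuousLinearMap.id ℝ X).prodMap W.subtypeL)) := by
  intro y
  obtain ⟨⟨x, v⟩, rfl⟩ := hV y
  exact ⟨(x, ⟨v, hVW v.2⟩), rfl⟩

theorem exists_finset_surjective_comp_prodMap_subtypeL [FiniteDimensional ℝ Y]
    {L : X × Λ →L[ℝ] Y} (hL : Surjective L) :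
    ∃ s : Finset Λ,
      Surjective (L.comp ((ContinuousLinearMap.id ℝ X).prodMap (span ℝ (s : Set Λ)).subtypeL)) := by
  classical
  set b := Module.finBasis ℝ Y
  choose w hw using fun i => hL (b i)
  refine ⟨Finset.univ.image fun i => (w i).2, fun y => ?_⟩
  let u i : X × span ℝ (Finset.univ.image fun i => (w i).2 : Set Λ) :=
    ((w i).1, ⟨(w i).2, subset_span (by simp)⟩)
  refine ⟨∑ i, b.repr y i • u i, ?_⟩
  simp only [map_sum, map_smul]
  conv_rhs => rw [← b.sum_repr y]
  congr! with i
  exact hw i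

theorem IsCompact.exists_finset_surjective_fderiv_comp [FiniteDimensional ℝ Y] {K : Set X}
    (hK : IsCompact K) {Φ : X × Λ → Y} (hΦ : ContDiff ℝ 1 Φ)
    (htrans : ∀ p : X × Λ, Φ p = 0 → Surjective (fderiv ℝ Φ p)) (l₀ : Λ) :
    ∃ s : Finset Λ, ∀ x ∈ K, Φ (x, l₀) = 0 → Surjective ((fderiv ℝ Φ (x, l₀)).comp
      ((ContinuousLinearMap.id ℝ X).prodMap (span ℝ (s : Set Λ)).subtypeL)) := by
  have hZ : IsCompact {x ∈ K | Φ (x, l₀) = 0} :=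
    hK.inter_right (isClosed_eq (by fun_prop) continuous_const)
  obtain ⟨s, hs⟩ := hZ.elim_directed_cover
    (fun s : Finset Λ => {x | Surjective ((fderiv ℝ Φ (x, l₀)).comp
      ((ContinuousLinearMap.id ℝ X).prodMap (span ℝ (s : Set Λ)).subtypeL))})
    (fun s => ContinuousLinearMap.isOpen_setOf_surjective.preimage
      (((hΦ.continuous_fderiv one_ne_zero).comp (Continuous.prodMk_left l₀)).clm_comp
        continuous_const))
    (fun x hx => mem_iUnion.2 (exists_finset_surjective_comp_prodMap_subtypeL (htrans _ hx.2)))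
    (Monotone.directed_le fun s t hst _ =>
      surjective_comp_prodMap_subtypeL_of_le (span_mono (Finset.coe_subset.2 hst)))
  exact ⟨s, fun x hx h0 => hs ⟨hx, h0⟩⟩

theorem fderiv_comp_add_prodMk_subtype {Φ : X × Λ → Y} (hΦ : Differentiable ℝ Φ) (l₀ : Λ)
    (V : Submodule ℝ Λ) (p : X × V) :
    fderiv ℝ (fun p : X × V => Φ (p.1, l₀ + p.2)) p =
      (fderiv ℝ Φ (p.1, l₀ + p.2)).comp ((ContinuousLinearMap.id ℝ X).prodMap V.subtypeL) := by
  have hinner : HasFDerivAt (fun p : X × V => (p.1, l₀ + (p.2 : Λ)))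
      ((ContinuousLinearMap.id ℝ X).prodMap V.subtypeL) p :=
    hasFDerivAt_fst.prodMk ((V.subtypeL.hasFDerivAt.comp p hasFDerivAt_snd).const_add l₀)
  exact ((hΦ _).hasFDerivAt.comp p hinner).fderiv

end Reduction

theorem IsCompact.frequently_forall_ne_zero {X V Y : Type*} [NormedAddCommGroup X]
    [NormedSpace ℝ X] [FiniteDimensional ℝ X] [NormedAddCommGroup V] [NormedSpace ℝ V]
    [FiniteDimensional ℝ V] [NormedAddCommGroup Y] [NormedSpace ℝ Y] [FiniteDimensional ℝ Y]
    (hdim : finrank ℝ X < finrank ℝ Y) {G : X × V → Y} (hG : ContDiff ℝ 1 G) {K : Set X}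
    (hK : IsCompact K) (hsurj : ∀ x ∈ K, G (x, 0) = 0 → Surjective (fderiv ℝ G (x, 0))) :
    ∃ᶠ v in 𝓝 (0 : V), ∀ x ∈ K, G (x, v) ≠ 0 := by
  set S := Prod.snd '' {p | G p = 0 ∧ Surjective (fderiv ℝ G p)}
  have hS : Dense Sᶜ := by
    rcases S.eq_empty_or_nonempty with hS | ⟨_, p, ⟨-, hp⟩, rfl⟩
    · simp [hS]
    -- a surjective derivative forces `dim Y ≤ dim X + dim V`, so the `ℕ`-subtraction is exact
    have hle := LinearMap.finrank_le_finrank_of_surjective hp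
    rw [finrank_prod] at hle
    refine dense_compl_of_dimH_lt_finrank ((LipschitzWith.prod_snd.dimH_image_le _).trans_lt ?_)
    refine (hG.dimH_setOf_eq_and_surjective_le 0).trans_lt ?_
    rw [finrank_prod]
    exact_mod_cast (by omega)
  have hO : IsOpen {p | G p = 0 → Surjective (fderiv ℝ G p)} := by
    simp_rw [imp_iff_not_or, ofPred_or]
    exact (isOpen_ne_fun hG.continuous continuous_const).union
      (ContinuousLinearMap.isOpen_setOf_surjective.preimage (hG.continuous_fderiv one_ne_zero))
  have htube := (hK.isOpen_setOf_forall_prodMk_mem hO).mem_nhds hsurj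
  refine ((mem_closure_iff_frequently.1 (hS 0)).and_eventually htube).mono ?_
  rintro v ⟨hvS, hv⟩ x hx h0
  exact hvS ⟨(x, v), ⟨h0, hv x hx h0⟩, rfl⟩

theorem dense_setOf_forall_ne_zero {X Λ Y : Type*} [NormedAddCommGroup X] [NormedSpace ℝ X]
    [FiniteDimensional ℝ X] [NormedAddCommGroup Λ] [NormedSpace ℝ Λ] [NormedAddCommGroup Y]
    [NormedSpace ℝ Y] [FiniteDimensional ℝ Y] (hdim : finrank ℝ X < finrank ℝ Y)
    {Φ : X × Λ → Y} (hΦ : ContDiff ℝ 1 Φ)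
    (htrans : ∀ p : X × Λ, Φ p = 0 → Surjective (fderiv ℝ Φ p)) {K : Set X} (hK : IsCompact K) :
    Dense {l : Λ | ∀ x ∈ K, Φ (x, l) ≠ 0} := by
  intro l₀
  obtain ⟨s, hs⟩ := hK.exists_finset_surjective_fderiv_comp hΦ htrans l₀
  have hval : ContDiff ℝ 1 fun p : X × span ℝ (s : Set Λ) => (p.2 : Λ) :=
    (span ℝ (s : Set Λ)).subtypeL.contDiff.comp contDiff_snd
  have hG : ContDiff ℝ 1 fun p : X × span ℝ (s : Set Λ) => Φ (p.1, l₀ + p.2) :=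
    hΦ.comp (contDiff_fst.prodMk (contDiff_const.add hval))
  have hfreq := hK.frequently_forall_ne_zero hdim hG fun x hx h0 => by
    rw [fderiv_comp_add_prodMk_subtype (hΦ.differentiable one_ne_zero)]
    simp only [ZeroMemClass.coe_zero, add_zero] at h0 ⊢
    exact hs x hx h0
  have hlim : Tendsto (fun v : span ℝ (s : Set Λ) => l₀ + (v : Λ)) (𝓝 0) (𝓝 l₀) := by
    simpa using tendsto_const_nhds.add (continuous_subtype_val.tendsto (0 : span ℝ (s : Set Λ)))
  exact mem_closure_iff_frequently.2 (hlim.frequently hfreq)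

theorem stmt_12_general {X Y Λ : Type*}
    [NormedAddCommGroup X] [NormedSpace ℝ X] [FiniteDimensional ℝ X]
    [NormedAddCommGroup Y] [NormedSpace ℝ Y] [FiniteDimensional ℝ Y]
    [NormedAddCommGroup Λ] [NormedSpace ℝ Λ]
    (hdim : Module.finrank ℝ X < Module.finrank ℝ Y)
    (Φ : X × Λ → Y) (hΦ : ContDiff ℝ 1 Φ)
    (htrans : ∀ p : X × Λ, Φ p = 0 → Function.Surjective (fderiv ℝ Φ p)) :
    ∃ U : ℕ → Set Λ, (∀ n, IsOpen (U n) ∧ Dense (U n)) ∧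
      ∀ l ∈ ⋂ n, U n, ∀ x : X, Φ (x, l) ≠ 0 := by
  refine ⟨fun n => {l | ∀ x ∈ closedBall (0 : X) n, Φ (x, l) ≠ 0}, fun n => ⟨?_, ?_⟩, ?_⟩
  · exact (isCompact_closedBall 0 _).isOpen_setOf_forall_prodMk_mem
      (isOpen_ne_fun hΦ.continuous continuous_const)
  · exact dense_setOf_forall_ne_zero hdim hΦ htrans (isCompact_closedBall 0 _)
  · intro l hl x
    exact mem_iInter.1 hl ⌈‖x‖⌉₊ x (mem_closedBall_zero_iff.2 (Nat.le_ceil _))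

/-- finite-dimensional-target instance of Henry's transversality theorem:
let `X`, `Y` be finite-dimensional spaces with `dim X < dim Y`, `Λ` a separable Banach
space, and `Φ : X × Λ → Y` a `C¹` map whose total derivative is surjective at every zero
of `Φ`.  Then for generic `λ` (a dense `G_δ` of `Λ`), the map `Φ(·, λ)` has no zero. -/
theorem stmt_12 {X Y Λ : Type*}
    [NormedAddCommGroup X] [NormedSpace ℝ X] [FiniteDimensional ℝ X]
    [NormedAddCommGroup Y] [NormedSpace ℝ Y] [FiniteDimensional ℝ Y]
    [NormedAddCommGroup Λ] [NormedSpace ℝ Λ] [CompleteSpace Λ]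
    [TopologicalSpace.SeparableSpace Λ]
    (hdim : Module.finrank ℝ X < Module.finrank ℝ Y)
    (Φ : X × Λ → Y) (hΦ : ContDiff ℝ 1 Φ)
    (htrans : ∀ p : X × Λ, Φ p = 0 → Function.Surjective (fderiv ℝ Φ p)) :
    ∃ U : ℕ → Set Λ, (∀ n, IsOpen (U n) ∧ Dense (U n)) ∧
      ∀ l ∈ ⋂ n, U n, ∀ x : X, Φ (x, l) ≠ 0 :=
  stmt_12_general hdim Φ hΦ htrans
end

section
/- Let 𝒢 be a finite network with types, X = ∏_c ℝ^{d_c} an admissible state space, and ⋈ a balanced coloring. Suppose the synchrony space Δ_⋈ (with its defining equalities relaxed to implications: Δ̂_⋈ = { x : c ⋈ c' ⇒ x_c = x_{c'} }) is invariant under the flow of ẋ = f(x) for every admissible vector field f. Given: (invariance axiom) for every admissible f and every x₀ ∈ Δ̂_⋈, the solution with x(0) = x₀ stays in Δ̂_⋈ on its interval of existence. Then: if a solution x(·) of ẋ = f(x) on an open interval J has synchrony pattern ⋈_{x,J₀} = ⋈ on some nonempty open subinterval J₀ ⊆ J, its global synchrony pattern satisfies ⋈_{x,J} ⊇ ⋈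 (i.e. c ⋈ c' implies x_c(t) = x_{c'}(t) for all t ∈ J). -/
/-!
The invariance axiom only speaks about solutions started at time `0`. Since the equation is
autonomous, a solution on `J` translated by a time `t₀ ∈ J₀` is again a solution, on an open
interval containing `0`, whose initial value `x t₀` lies in `Δ̂_⋈` because `⋈ = ⋈_{x,J₀}`.
Hence the translated solution stays in `Δ̂_⋈`, i.e. `x t ∈ Δ̂_⋈` for all `t ∈ J`.
-/

theorem hasDerivAt_comp_add_const_of_forall {E : Type*} [NormedAddCommGroup E]
    [NormedSpace ℝ E] {f : E → E} {x : ℝ → E} {J : Set ℝ}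
    (hx : ∀ t ∈ J, HasDerivAt x (f (x t)) t) (t₀ : ℝ) :
    ∀ s ∈ (· + t₀) ⁻¹' J, HasDerivAt (fun s => x (s + t₀)) (f (x (s + t₀))) s :=
  fun s hs => (hx (s + t₀) hs).comp_add_const s t₀

theorem mem_of_invariant_from_zero {E : Type*} [NormedAddCommGroup E] [NormedSpace ℝ E]
    {f : E → E} {S : Set E}
    (hinv : ∀ x₀ ∈ S, ∀ (y : ℝ → E) (J' : Set ℝ), IsOpen J' → J'.OrdConnected →
      (0 : ℝ) ∈ J' → y 0 = x₀ → (∀ t ∈ J', HasDerivAt y (f (y t)) t) → ∀ t ∈ J', y t ∈ S)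
    {J : Set ℝ} (hJo : IsOpen J) (hJc : J.OrdConnected)
    {x : ℝ → E} (hx : ∀ t ∈ J, HasDerivAt x (f (x t)) t)
    {t₀ : ℝ} (ht₀ : t₀ ∈ J) (hxt₀ : x t₀ ∈ S) :
    ∀ t ∈ J, x t ∈ S := by
  intro t ht
  have hshift := hinv (x t₀) hxt₀ (fun s => x (s + t₀)) ((· + t₀) ⁻¹' J)
    (hJo.preimage (continuous_add_const t₀)) (hJc.preimage_mono (add_left_mono (a := t₀)))
    (by simpa using ht₀) (by simp) (hasDerivAt_comp_add_const_of_forall hx t₀)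
    (t - t₀) (by simpa using ht)
  simpa using hshift

theorem stmt_18_general {Cell : Type*} [Fintype Cell] {V : Type*}
    [NormedAddCommGroup V] [NormedSpace ℝ V]
    (Bow : Cell → Cell → Prop)
    (f : (Cell → V) → (Cell → V))
    (hinv : ∀ x₀ : Cell → V, (∀ c c', Bow c c' → x₀ c = x₀ c') →
      ∀ (y : ℝ → Cell → V) (J' : Set ℝ), IsOpen J' → J'.OrdConnected →
        (0 : ℝ) ∈ J' → y 0 = x₀ → (∀ t ∈ J', HasDerivAt y (f (y t)) t) →
        ∀ t ∈ J', ∀ c c', Bow c c' → y t c = y t c')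
    (J : Set ℝ) (hJo : IsOpen J) (hJc : J.OrdConnected)
    (x : ℝ → Cell → V) (hx : ∀ t ∈ J, HasDerivAt x (f (x t)) t)
    (J₀ : Set ℝ) (hJ₀ : J₀ ⊆ J) (hJ₀ne : J₀.Nonempty)
    (hpat : ∀ c c', Bow c c' ↔ ∀ t ∈ J₀, x t c = x t c') :
    ∀ t ∈ J, ∀ c c', Bow c c' → x t c = x t c' := by
  obtain ⟨t₀, ht₀⟩ := hJ₀ne
  exact mem_of_invariant_from_zero (S := {u : Cell → V | ∀ c c', Bow c c' → u c = u c'})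
    hinv hJo hJc hx (hJ₀ ht₀) (fun c c' hcc' => (hpat c c').1 hcc' t₀ ht₀)

/-- let `⋈` (`Bow`) be a (balanced) coloring whose relaxed synchrony space
`Δ̂_⋈ = { u : c ⋈ c' → u c = u c' }` is invariant under the flow of the `C¹` vector field
`f` (invariance axiom: every solution starting at time `0` in `Δ̂_⋈` stays in `Δ̂_⋈` on its
open interval of existence).  If a solution `x` of `ẋ = f (x)` on an open interval `J`
has synchrony pattern exactly `⋈` on some nonempty open subinterval `J₀ ⊆ J`, then the
synchrony propagates: `c ⋈ c'` implies `x t c = x t c'` for all `t ∈ J`. -/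
theorem stmt_18 {Cell : Type*} [Fintype Cell] {V : Type*}
    [NormedAddCommGroup V] [NormedSpace ℝ V]
    (Bow : Cell → Cell → Prop)
    (f : (Cell → V) → (Cell → V)) (hf : ContDiff ℝ 1 f)
    (hinv : ∀ x₀ : Cell → V, (∀ c c', Bow c c' → x₀ c = x₀ c') →
      ∀ (y : ℝ → Cell → V) (J' : Set ℝ), IsOpen J' → J'.OrdConnected →
        (0 : ℝ) ∈ J' → y 0 = x₀ → (∀ t ∈ J', HasDerivAt y (f (y t)) t) →
        ∀ t ∈ J', ∀ c c', Bow c c' → y t c = y t c')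
    (J : Set ℝ) (hJo : IsOpen J) (hJc : J.OrdConnected)
    (x : ℝ → Cell → V) (hx : ∀ t ∈ J, HasDerivAt x (f (x t)) t)
    (J₀ : Set ℝ) (hJ₀ : J₀ ⊆ J) (hJ₀o : IsOpen J₀) (hJ₀ne : J₀.Nonempty)
    (hpat : ∀ c c', Bow c c' ↔ ∀ t ∈ J₀, x t c = x t c') :
    ∀ t ∈ J, ∀ c c', Bow c c' → x t c = x t c' :=
  stmt_18_general Bow f hinv J hJo hJc x hx J₀ hJ₀ hJ₀ne hpat
end
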